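/- In the hourly salary model, the set of agents of a rigorously strongly winning coalition can differ from the set of agents of the cheapest feasible coalition. Concretely: with three agents a, b, c all having minimal hourly salary 1, where coalition {a,b} completes the project with times t_a = t_b = 10 and coalition {b,c} with times t_b = 4, t_c = 20, and budget v = 28, the cheapest feasible coalition is {a,b} with cost 20, yet the coalition {b,c} with hourly salaries s_b = 2, s_c = 1 (cost 28) is rigorously strongly winning. -/

import Mathlib

open Finset

/-- A coalition: a set of member agents, a salary function, and a total cost (bid). -/
structure Coal (α : Type) where
  mem : Finset α
  sal : α → ℕ
  cost : ℕ

namespace Coal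

variable {α : Type} [DecidableEq α]

/-- `C` is cheaper than `C'`: strictly lower cost, or equal cost and preferred by the
tie-breaking order `prec` on agent sets. -/
def cheaper (prec : Finset α → Finset α → Prop) (C C' : Coal α) : Prop :=
  C.cost < C'.cost ∨ (C.cost = C'.cost ∧ prec C.mem C'.mem)

/-- `C` is explicitly endangered by `C'`: `C'` is feasible, disjoint from `C`, and cheaper. -/
def explEnd (Feas : Coal α → Prop) (prec : Finset α → Finset α → Prop)
    (C C' : Coal α) : Prop :=
  Feas C' ∧ C.mem ∩ C'.mem = ∅ ∧ cheaper prec C' C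

/-- `C` is implicitly endangered by `C'`: `C'` is feasible, overlaps `C`, every shared
agent gets in `C'` at least as good a salary as in `C`, and `C'` differs from `C`
(in member set or salaries of members). -/
def implEnd (Feas : Coal α → Prop) (C C' : Coal α) : Prop :=
  Feas C' ∧ (C.mem ∩ C'.mem).Nonempty ∧
    (∀ i ∈ C.mem ∩ C'.mem, C.sal i ≤ C'.sal i) ∧
    ¬ (C.mem = C'.mem ∧ ∀ i ∈ C.mem, C.sal i = C'.sal i)

/-- `C` is strictly implicitly endangered by `C'`: as implicit endangerment but every
shared agent gets a strictly better salary in `C'`. -/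
def strictImplEnd (Feas : Coal α → Prop) (C C' : Coal α) : Prop :=
  Feas C' ∧ (C.mem ∩ C'.mem).Nonempty ∧
    ∀ i ∈ C.mem ∩ C'.mem, C.sal i < C'.sal i

/-- All members of `C` unanimously propose `C` in the profile `π`. -/
def unan (π : α → Coal α) (C : Coal α) : Prop := ∀ j ∈ C.mem, π j = C

open Classical in
/-- Payoff of agent `i` in the decentralized game: her salary in her proposed coalition if
that coalition is feasible, unanimously proposed, contains her, and no cheaper feasible
unanimously proposed coalition exists; otherwise 0. -/
noncomputable def payoff (Feas : Coal α → Prop) (prec : Finset α → Finset α → Prop)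
    (π : α → Coal α) (i : α) : ℕ :=
  if i ∈ (π i).mem ∧ Feas (π i) ∧ unan π (π i) ∧
      ¬ ∃ C', Feas C' ∧ unan π C' ∧ cheaper prec C' (π i)
  then (π i).sal i else 0

/-- Rigorously Strong Nash Equilibrium: no subset of agents can jointly deviate so that
every deviating agent's payoff is at least her current one and some agent's payoff changes. -/
def RSNE (Feas : Coal α → Prop) (prec : Finset α → Finset α → Prop)
    (π : α → Coal α) : Prop :=
  ¬ ∃ (D : Finset α) (π' : α → Coal α),
    (∀ i ∉ D, π' i = π i) ∧
    (∀ i ∈ D, payoff Feas prec π i ≤ payoff Feas prec π' i) ∧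
    ∃ j, payoff Feas prec π' j ≠ payoff Feas prec π j

/-- `C` is rigorously strongly winning: some RSNE gives the members of `C` the positive
payoffs `C.sal`. -/
def RSWinning (Feas : Coal α → Prop) (prec : Finset α → Finset α → Prop)
    (C : Coal α) : Prop :=
  ∃ π, RSNE Feas prec π ∧ ∀ i ∈ C.mem, payoff Feas prec π i = C.sal i ∧ 0 < C.sal i

/-- Project salary model feasibility: the member set can complete the project, salaries are
at least minimal, the cost is the sum of members' salaries, and the budget is respected. -/
def feasPS (Fset : Finset α → Prop) (m : α → ℕ) (v : ℕ) (C : Coal α) : Prop :=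
  Fset C.mem ∧ (∀ i ∈ C.mem, m i ≤ C.sal i) ∧
    C.cost = ∑ i ∈ C.mem, C.sal i ∧ C.cost ≤ v

/-- Weakly winning coalition: feasible, not explicitly endangered, and every implicitly
endangering feasible coalition is itself explicitly or implicitly endangered. -/
def weaklyWinning (Feas : Coal α → Prop) (prec : Finset α → Finset α → Prop)
    (C : Coal α) : Prop :=
  Feas C ∧ (¬ ∃ C', explEnd Feas prec C C') ∧
    ∀ C', implEnd Feas C C' → ∃ C'', explEnd Feas prec C' C'' ∨ implEnd Feas C' C''

end Coal

/-- Hourly salary feasibility in the concrete instance: agents a = 0, b = 1, c = 2, all with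
minimal hourly salary 1; coalition {a,b} works times (10,10), coalition {b,c} works times
(4,20); cost is the sum of time·salary; budget v = 28. -/
def feas5 (C : Coal (Fin 3)) : Prop :=
  (C.mem = {0, 1} ∧ (∀ i ∈ C.mem, 1 ≤ C.sal i) ∧
    C.cost = 10 * C.sal 0 + 10 * C.sal 1 ∧ C.cost ≤ 28) ∨
  (C.mem = {1, 2} ∧ (∀ i ∈ C.mem, 1 ≤ C.sal i) ∧
    C.cost = 4 * C.sal 1 + 20 * C.sal 2 ∧ C.cost ≤ 28)


/- Agent b (= 1) belongs to every feasible coalition, so no feasible coalition is disjoint from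
{b,c}. Paying b at least 2 prices {a,b} out of the budget (cost ≥ 30 > 28), and within {b,c}
the budget 4·s_b + 20·s_c ≤ 28 then forces s_b = 2, s_c = 1, i.e. the same coalition. -/

namespace feas5

variable {C : Coal (Fin 3)}

theorem one_mem (hC : feas5 C) : 1 ∈ C.mem := by
  rcases hC with ⟨hm, -⟩ | ⟨hm, -⟩ <;> rw [hm] <;> decide

theorem twenty_le_cost (hC : feas5 C) : 20 ≤ C.cost ∧ (C.cost = 20 → C.mem = {0, 1}) := by
  rcases hC with ⟨hm, hs, hc, -⟩ | ⟨hm, hs, hc, -⟩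
  · have := hs 0 (by rw [hm]; decide)
    have := hs 1 (by rw [hm]; decide)
    exact ⟨by omega, fun _ => hm⟩
  · have := hs 1 (by rw [hm]; decide)
    have := hs 2 (by rw [hm]; decide)
    exact ⟨by omega, fun _ => by omega⟩

theorem eq_of_two_le_sal_one (hC : feas5 C) (h1 : 2 ≤ C.sal 1) :
    C.mem = {1, 2} ∧ C.sal 1 = 2 ∧ C.sal 2 = 1 := by
  rcases hC with ⟨hm, hs, hc, hv⟩ | ⟨hm, hs, hc, hv⟩
  · have := hs 0 (by rw [hm]; decide)
    omega
  · have := hs 2 (by rw [hm]; decide)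
    exact ⟨hm, by omega, by omega⟩

end feas5

theorem stmt5_general (prec : Finset (Fin 3) → Finset (Fin 3) → Prop) :
    (feas5 ⟨{0, 1}, fun _ => 1, 20⟩ ∧
      (∀ C, feas5 C → 20 ≤ C.cost ∧ (C.cost = 20 → C.mem = {0, 1}))) ∧
    (¬ ∃ C', Coal.explEnd feas5 prec
        (⟨{1, 2}, fun i => if i = 1 then 2 else 1, 28⟩ : Coal (Fin 3)) C' ∨
      Coal.implEnd feas5
        (⟨{1, 2}, fun i => if i = 1 then 2 else 1, 28⟩ : Coal (Fin 3)) C') ∧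
    ({1, 2} : Finset (Fin 3)) ≠ {0, 1} := by
  refine ⟨⟨Or.inl ⟨rfl, fun _ _ => le_rfl, rfl, by norm_num⟩, fun _ hC => hC.twenty_le_cost⟩,
    ?_, by decide⟩
  rintro ⟨C', ⟨hC', hdisj, -⟩ | ⟨hC', -, hsal, hdiff⟩⟩
  · have hb : (1 : Fin 3) ∈ ({1, 2} : Finset (Fin 3)) ∩ C'.mem :=
      mem_inter.2 ⟨by decide, hC'.one_mem⟩
    simp [hdisj] at hb
  · obtain ⟨hm, h1, h2⟩ := hC'.eq_of_two_le_sal_one (by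
      simpa using hsal 1 (mem_inter.2 ⟨by decide, hC'.one_mem⟩))
    refine hdiff ⟨hm.symm, fun i hi => ?_⟩
    fin_cases hi <;> simp [h1, h2]

/-- In the hourly salary model the agent set of a rigorously strongly winning coalition may
differ from that of the cheapest feasible coalition: here {a,b} with unit salaries is the
cheapest feasible coalition (cost 20), yet {b,c} with hourly salaries s_b = 2, s_c = 1
(cost 28) is rigorously strongly winning (it is neither explicitly nor implicitly
endangered), and its agent set differs from {a,b}. -/
theorem stmt5 (prec : Finset (Fin 3) → Finset (Fin 3) → Prop)
    (hprec : IsStrictTotalOrder (Finset (Fin 3)) prec) :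
    (feas5 ⟨{0, 1}, fun _ => 1, 20⟩ ∧
      (∀ C, feas5 C → 20 ≤ C.cost ∧ (C.cost = 20 → C.mem = {0, 1}))) ∧
    (¬ ∃ C', Coal.explEnd feas5 prec
        (⟨{1, 2}, fun i => if i = 1 then 2 else 1, 28⟩ : Coal (Fin 3)) C' ∨
      Coal.implEnd feas5
        (⟨{1, 2}, fun i => if i = 1 then 2 else 1, 28⟩ : Coal (Fin 3)) C') ∧
    ({1, 2} : Finset (Fin 3)) ≠ {0, 1} :=
  stmt5_general prec
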